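/- arXiv:2505.15283 — 3 statements merged into one kernel-verified Lean document; each statement's English description precedes it below -/
import Mathlib

section
/- Let μ be a probability measure on ℝ with finite mean m̄, Ω₋ = {x ≤ m̄}, Ω₊ = {x > m̄}, with μ(Ω±) > 0 and conditional means m̄₋, m̄₊. Then W₁(μ, δ_{m̄}) ≤ √((m̄₊ − m̄)(m̄ − m̄₋)). -/
/-
Transport all of `μ` to the mean `m`: the cost is the mean absolute deviation `∫ |x - m| dμ`.
Since `∫ (x - m) dμ = 0`, the excess above the mean, `D = ∫_{x > m} (x - m) dμ`, equals the deficit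
below it, so `∫ |x - m| dμ = 2D`. With `a = μ(Ω₋)`, `b = μ(Ω₊)` one has
`D = b (m̄₊ - m) = a (m - m̄₋)`, hence `(2D)² = 4ab (m̄₊ - m)(m - m̄₋) ≤ (m̄₊ - m)(m - m̄₋)` because `4ab ≤ (a + b)² = 1`.
-/

open MeasureTheory
open scoped ENNReal NNReal

/-- The Wasserstein-1 distance between two Borel measures on `ℝ`,
defined as the infimum over all couplings `γ` of the transport cost. -/
noncomputable def W1 (μ ν : Measure ℝ) : ENNReal :=
  ⨅ (γ : Measure (ℝ × ℝ)) (_ : γ.map Prod.fst = μ ∧ γ.map Prod.snd = ν),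
    ∫⁻ p, edist p.1 p.2 ∂γ

open Set

lemma two_mul_le_sqrt_mul_of_eq_mul {a b p q D : ℝ} (ha : 0 < a) (hb : 0 < b) (hab : a + b = 1)
    (hp : D = b * p) (hq : D = a * q) : 2 * D ≤ √(p * q) := by
  have hpq : a * b * (p * q) = D ^ 2 := by rw [sq]; nth_rw 1 [hp]; rw [hq]; ring
  have hpq_nonneg : 0 ≤ p * q :=
    (mul_nonneg_iff_of_pos_left (mul_pos ha hb)).1 (hpq ▸ sq_nonneg D)
  have h4ab : 4 * (a * b) ≤ 1 := by nlinarith [sq_nonneg (a - b)]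
  refine (le_abs_self _).trans (Real.abs_le_sqrt ?_)
  calc (2 * D) ^ 2 = 4 * (a * b) * (p * q) := by rw [mul_assoc 4, hpq]; ring
    _ ≤ p * q := mul_le_of_le_one_left hpq_nonneg h4ab

lemma W1_dirac_le_lintegral_edist (μ : Measure ℝ) [IsProbabilityMeasure μ] (c : ℝ) :
    W1 μ (Measure.dirac c) ≤ ∫⁻ x, edist x c ∂μ := by
  have hf : Measurable fun x : ℝ => (x, c) := measurable_id.prodMk measurable_const
  refine (iInf₂_le (μ.map fun x => (x, c)) ⟨?_, ?_⟩).trans_eq (lintegral_map (by fun_prop) hf)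
  · rw [Measure.map_map measurable_fst hf]
    exact Measure.map_id
  · rw [Measure.map_map measurable_snd hf]
    simp [Function.comp_def]

lemma W1_dirac_le_integral_abs_sub (μ : Measure ℝ) [IsProbabilityMeasure μ]
    (hμ : Integrable (fun t : ℝ => t) μ) (c : ℝ) :
    W1 μ (Measure.dirac c) ≤ ENNReal.ofReal (∫ x, |x - c| ∂μ) := by
  have hdev : Integrable (fun x => |x - c|) μ := (hμ.sub (integrable_const c)).abs
  rw [ofReal_integral_eq_lintegral_ofReal hdev (.of_forall fun _ => abs_nonneg _)]
  simpa only [edist_dist, Real.dist_eq] using W1_dirac_le_lintegral_edist μ c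

section SetIntegral

variable {μ : Measure ℝ}

lemma setIntegral_sub_const_eq_measureReal_mul [IsFiniteMeasure μ] {s : Set ℝ}
    (hμ : IntegrableOn (fun t : ℝ => t) s μ) (hs : μ.real s ≠ 0) (c : ℝ) :
    ∫ x in s, (x - c) ∂μ = μ.real s * ((∫ x in s, x ∂μ) / μ.real s - c) := by
  rw [integral_sub hμ (integrable_const c), setIntegral_const, smul_eq_mul, mul_sub,
    mul_div_cancel₀ _ hs]

lemma integral_abs_sub_eq_setIntegral_Ioi_sub_setIntegral_Iic [IsFiniteMeasure μ]
    (hμ : Integrable (fun t : ℝ => t) μ) (c : ℝ) :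
    ∫ x, |x - c| ∂μ = ∫ x in Ioi c, (x - c) ∂μ - ∫ x in Iic c, (x - c) ∂μ := by
  have hdev : Integrable (fun x => |x - c|) μ := (hμ.sub (integrable_const c)).abs
  rw [← integral_add_compl measurableSet_Ioi hdev, compl_Ioi, sub_eq_add_neg, ← integral_neg]
  congr 1
  · exact setIntegral_congr_fun measurableSet_Ioi fun x hx => abs_of_pos (sub_pos.2 hx)
  · exact setIntegral_congr_fun measurableSet_Iic fun x hx => abs_of_nonpos (sub_nonpos.2 hx)

lemma setIntegral_Iic_add_setIntegral_Ioi_sub_mean [IsProbabilityMeasure μ]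
    (hμ : Integrable (fun t : ℝ => t) μ) :
    ∫ x in Iic (∫ t, t ∂μ), (x - ∫ t, t ∂μ) ∂μ
      + ∫ x in Ioi (∫ t, t ∂μ), (x - ∫ t, t ∂μ) ∂μ = 0 := by
  have hdev : Integrable (fun x => x - ∫ t, t ∂μ) μ := hμ.sub (integrable_const _)
  rw [← compl_Iic, integral_add_compl measurableSet_Iic hdev,
    integral_sub hμ (integrable_const _), integral_const, probReal_univ, one_smul, sub_self]

end SetIntegral

theorem W1_dirac_mean_le_sqrt (μ : Measure ℝ) [IsProbabilityMeasure μ]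
    (hμ : Integrable (fun t : ℝ => t) μ)
    (m : ℝ) (hmean : m = ∫ t, t ∂μ)
    (hminus : 0 < μ {x : ℝ | x ≤ m}) (hplus : 0 < μ {x : ℝ | m < x})
    (mminus mplus : ℝ)
    (hmm : mminus = (∫ x in {x : ℝ | x ≤ m}, x ∂μ) / (μ {x : ℝ | x ≤ m}).toReal)
    (hmp : mplus = (∫ x in {x : ℝ | m < x}, x ∂μ) / (μ {x : ℝ | m < x}).toReal) :
    W1 μ (Measure.dirac m) ≤
      ENNReal.ofReal (Real.sqrt ((mplus - m) * (m - mminus))) := by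
  have ha : 0 < μ.real (Iic m) := ENNReal.toReal_pos hminus.ne' (measure_ne_top _ _)
  have hb : 0 < μ.real (Ioi m) := ENNReal.toReal_pos hplus.ne' (measure_ne_top _ _)
  have hab : μ.real (Iic m) + μ.real (Ioi m) = 1 := by
    rw [← compl_Iic, measureReal_add_measureReal_compl measurableSet_Iic, probReal_univ]
  have hmp' : mplus = (∫ x in Ioi m, x ∂μ) / μ.real (Ioi m) := hmp
  have hmm' : mminus = (∫ x in Iic m, x ∂μ) / μ.real (Iic m) := hmm
  set D := ∫ x in Ioi m, (x - m) ∂μ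
  have hsplit : ∫ x in Iic m, (x - m) ∂μ + D = 0 := by
    have h := setIntegral_Iic_add_setIntegral_Ioi_sub_mean hμ
    rwa [← hmean] at h
  have hD_plus : D = μ.real (Ioi m) * (mplus - m) :=
    hmp' ▸ setIntegral_sub_const_eq_measureReal_mul hμ.integrableOn hb.ne' m
  have hD_minus : -D = μ.real (Iic m) * (mminus - m) := by
    rw [hmm', ← setIntegral_sub_const_eq_measureReal_mul hμ.integrableOn ha.ne' m]
    linarith
  calc W1 μ (Measure.dirac m) ≤ ENNReal.ofReal (∫ x, |x - m| ∂μ) :=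
        W1_dirac_le_integral_abs_sub μ hμ m
    _ = ENNReal.ofReal (2 * D) := by
        rw [integral_abs_sub_eq_setIntegral_Ioi_sub_setIntegral_Iic hμ]
        congr 1
        linarith
    _ ≤ _ := ENNReal.ofReal_le_ofReal <|
        two_mul_le_sqrt_mul_of_eq_mul ha hb hab hD_plus (by linarith)
end

section
/- Let μ be a continuous probability measure with supp(μ) ⊆ [a,b], −∞ < a < b < ∞, and let T be the median-split quantization algorithm (split function f(μ) = median of μ). Then for every n ≥ 0, W₁(μ, T(μ,n)) ≤ (b−a)/2^n. -/
open MeasureTheory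
open scoped ENNReal NNReal

/-- The conditional (normalized restricted) measure of `μ` on `s`. -/
noncomputable def condOn (μ : Measure ℝ) (s : Set ℝ) : Measure ℝ :=
  (μ s)⁻¹ • μ.restrict s

open Classical in
/-- The divide-and-conquer quantization algorithm driven by a split function `f`. -/
noncomputable def T (f : Measure ℝ → ℝ) : ℕ → Measure ℝ → Measure ℝ
  | 0, μ => Measure.dirac (f μ)
  | n + 1, μ =>
    if μ {x | x ≤ f μ} = 0 ∨ μ {x | f μ < x} = 0 then Measure.dirac (f μ)
    else
      μ {x | x ≤ f μ} • T f n (condOn μ {x | x ≤ f μ}) +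
        μ {x | f μ < x} • T f n (condOn μ {x | f μ < x})

/-! The median `m` of a continuous `μ` splits it into two conditional probability measures of
mass `1/2`, supported on `[a, m]` and `[m, b]`; continuity is exactly what makes the CDF take the
value `1/2` at `m`. Since `W1` is subadditive on sums and homogeneous under scaling, the error at
depth `n + 1` is at most the average of the errors of the two halves at depth `n`, and the lengths
of their supports add up to `b - a`. Induction therefore halves the bound at each level. -/

open ProbabilityTheory Set Filter

lemma W1_dirac_le (μ : Measure ℝ) [IsProbabilityMeasure μ] (m : ℝ) :
    W1 μ (Measure.dirac m) ≤ ∫⁻ x, edist x m ∂μ := by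
  have hmeas : Measurable fun x : ℝ => (x, m) := measurable_id.prodMk measurable_const
  have hcoupling : (μ.map fun x => (x, m)).map Prod.fst = μ ∧
      (μ.map fun x => (x, m)).map Prod.snd = Measure.dirac m := by
    rw [Measure.map_map measurable_fst hmeas, Measure.map_map measurable_snd hmeas]
    simp [Function.comp_def, Measure.map_const]
  exact iInf₂_le_of_le _ hcoupling (lintegral_map (measurable_fst.edist measurable_snd) hmeas).le

lemma W1_add_le (μ₁ μ₂ ν₁ ν₂ : Measure ℝ) :
    W1 (μ₁ + μ₂) (ν₁ + ν₂) ≤ W1 μ₁ ν₁ + W1 μ₂ ν₂ := by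
  simp_rw [W1, ENNReal.iInf_add, ENNReal.add_iInf]
  refine le_iInf₂ fun γ₁ h₁ => le_iInf₂ fun γ₂ h₂ => iInf₂_le_of_le (γ₁ + γ₂) ?_ ?_
  · simp only [Measure.map_add _ _ measurable_fst, Measure.map_add _ _ measurable_snd, h₁, h₂,
      and_self]
  · exact (lintegral_add_measure _ _ _).le

lemma W1_smul_le (c : ℝ≥0∞) (hc : c ≠ ∞) (μ ν : Measure ℝ) :
    W1 (c • μ) (c • ν) ≤ c * W1 μ ν := by
  rcases eq_or_ne c 0 with rfl | hc₀
  · refine (iInf₂_le 0 ?_).trans ?_ <;> simp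
  simp_rw [W1, ENNReal.mul_iInf_of_ne hc₀ hc]
  refine le_iInf₂ fun γ h => (iInf₂_le (c • γ) ?_).trans_eq ?_
  · simp only [Measure.map_smul, h.1, h.2, and_self]
  · exact lintegral_smul_measure _ _

section Median

variable (μ : Measure ℝ) [IsProbabilityMeasure μ]

noncomputable def median (ν : Measure ℝ) : ℝ := sInf {x : ℝ | (1 : ℝ≥0∞) / 2 ≤ ν (Iic x)}

lemma continuous_cdf [NullSingletonClass μ] : Continuous (cdf μ) := by
  refine continuous_iff_continuousAt.2 fun x => ?_
  rw [(monotone_cdf μ).continuousAt_iff_leftLim_eq_rightLim, (cdf μ).rightLim_eq]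
  have hatom : (cdf μ).measure {x} = 0 := by rw [measure_cdf]; exact measure_singleton x
  rw [StieltjesFunction.measure_singleton, ENNReal.ofReal_eq_zero, sub_nonpos] at hatom
  exact le_antisymm ((monotone_cdf μ).leftLim_le le_rfl) hatom

lemma median_eq_sInf_cdf : median μ = sInf (cdf μ ⁻¹' Ici (1 / 2)) := by
  show sInf _ = _
  congr 1
  ext x
  rw [mem_ofPred_eq, ← ofReal_cdf, mem_preimage, mem_Ici, ← ENNReal.ofReal_le_ofReal_iff
    (cdf_nonneg μ x), ENNReal.ofReal_div_of_pos two_pos, ENNReal.ofReal_one, ENNReal.ofReal_ofNat]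

lemma cdf_median [NullSingletonClass μ] : cdf μ (median μ) = 1 / 2 := by
  set S := cdf μ ⁻¹' Ici (1 / 2)
  have hne : S.Nonempty :=
    ((tendsto_cdf_atTop μ).eventually (Ici_mem_nhds (by norm_num : (1 / 2 : ℝ) < 1))).exists
  obtain ⟨a, ha⟩ := eventually_atBot.1
    ((tendsto_cdf_atBot μ).eventually (Iio_mem_nhds (by norm_num : (0 : ℝ) < 1 / 2)))
  have hbdd : BddBelow S := ⟨a, fun x hx => by
    by_contra! hxa
    exact (ha x hxa.le).not_ge hx⟩
  rw [median_eq_sInf_cdf]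
  set m := sInf S
  refine le_antisymm ?_ ((isClosed_Ici.preimage (continuous_cdf μ)).csInf_mem hne hbdd)
  refine le_of_tendsto ((continuous_cdf μ).continuousAt.tendsto.mono_left
    (nhdsWithin_le_nhds (s := Iio m)))
    (eventually_nhdsWithin_of_forall fun x hx => ?_)
  have hxS : x ∉ S := notMem_of_lt_csInf hx hbdd
  exact (not_le.1 hxS).le

lemma measure_Iic_median [NullSingletonClass μ] : μ (Iic (median μ)) = 1 / 2 := by
  rw [← ofReal_cdf, cdf_median, ENNReal.ofReal_div_of_pos two_pos, ENNReal.ofReal_one,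
    ENNReal.ofReal_ofNat]

lemma measure_Ioi_median [NullSingletonClass μ] : μ (Ioi (median μ)) = 1 / 2 := by
  rw [← compl_Iic, prob_compl_eq_one_sub measurableSet_Iic, measure_Iic_median,
    one_div, ENNReal.one_sub_inv_two]

lemma median_mem_Ioo [NullSingletonClass μ] {a b : ℝ} (hsupp : ∀ᵐ x ∂μ, x ∈ Icc a b) :
    median μ ∈ Ioo a b := by
  have hnull : ∀ s, (∀ x ∈ s, x ∉ Icc a b) → μ s = 0 := fun s hs =>
    measure_mono_null (fun x hx => hs x hx) (ae_iff.1 hsupp)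
  constructor
  · by_contra! h
    have := hnull (Iio (median μ)) fun x hx hx' => by linarith [hx'.1, mem_Iio.1 hx]
    rw [measure_congr Iio_ae_eq_Iic, measure_Iic_median] at this
    norm_num at this
  · by_contra! h
    have := hnull (Ioi (median μ)) fun x hx hx' => by linarith [hx'.2, mem_Ioi.1 hx]
    rw [measure_Ioi_median] at this
    norm_num at this

end Median

section Quantization

instance {Ω : Type*} [MeasurableSpace Ω] (μ : Measure Ω) [NullSingletonClass μ] (s : Set Ω) :
    NullSingletonClass μ[|s] :=
  ⟨fun x => cond_absolutelyContinuous (measure_singleton x)⟩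

lemma smul_cond_add_smul_cond_compl {Ω : Type*} [MeasurableSpace Ω] (μ : Measure Ω)
    [IsFiniteMeasure μ] {s : Set Ω} (hs : MeasurableSet s) :
    μ s • μ[|s] + μ sᶜ • μ[|sᶜ] = μ := by
  ext t ht
  simp only [Measure.add_apply, Measure.smul_apply, smul_eq_mul, mul_comm (μ s), mul_comm (μ sᶜ)]
  exact cond_add_cond_compl_eq hs μ

/-- `condOn` is definitionally `ProbabilityTheory.cond`, written `μ[|s]`. -/
lemma T_succ_of_ne (f : Measure ℝ → ℝ) (n : ℕ) (μ : Measure ℝ) (h₁ : μ (Iic (f μ)) ≠ 0)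
    (h₂ : μ (Ioi (f μ)) ≠ 0) :
    T f (n + 1) μ =
      μ (Iic (f μ)) • T f n μ[|Iic (f μ)] + μ (Ioi (f μ)) • T f n μ[|Ioi (f μ)] := by
  rw [T]
  exact if_neg (not_or.2 ⟨h₁, h₂⟩)

variable (μ : Measure ℝ) [IsProbabilityMeasure μ] [NullSingletonClass μ]

lemma half_smul_cond_Iic_median_add_half_smul_cond_Ioi :
    (1 / 2 : ℝ≥0∞) • μ[|Iic (median μ)] + (1 / 2 : ℝ≥0∞) • μ[|Ioi (median μ)] = μ := by
  conv_rhs => rw [← smul_cond_add_smul_cond_compl μ (measurableSet_Iic (a := median μ))]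
  rw [compl_Iic, measure_Iic_median, measure_Ioi_median]

lemma T_median_succ (n : ℕ) :
    T median (n + 1) μ = (1 / 2 : ℝ≥0∞) • T median n μ[|Iic (median μ)] +
      (1 / 2 : ℝ≥0∞) • T median n μ[|Ioi (median μ)] := by
  rw [T_succ_of_ne median n μ (by simp [measure_Iic_median]) (by simp [measure_Ioi_median]),
    measure_Iic_median, measure_Ioi_median]

end Quantization

theorem W1_T_median_le (μ : Measure ℝ) [IsProbabilityMeasure μ] [NullSingletonClass μ]
    {a b : ℝ} (hsupp : ∀ᵐ x ∂μ, x ∈ Icc a b) (n : ℕ) :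
    W1 μ (T median n μ) ≤ ENNReal.ofReal ((b - a) / 2 ^ n) := by
  induction n generalizing μ a b with
  | zero =>
    have hm := median_mem_Ioo μ hsupp
    calc W1 μ (T median 0 μ) ≤ ∫⁻ x, edist x (median μ) ∂μ := W1_dirac_le μ _
      _ ≤ ∫⁻ _, ENNReal.ofReal (b - a) ∂μ := lintegral_mono_ae <| hsupp.mono fun x hx => by
          rw [edist_dist]
          exact ENNReal.ofReal_le_ofReal (Real.dist_le_of_mem_Icc hx (Ioo_subset_Icc_self hm))
      _ = ENNReal.ofReal ((b - a) / 2 ^ 0) := by simp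
  | succ n ih =>
    set m := median μ
    obtain ⟨ham, hmb⟩ := median_mem_Ioo μ hsupp
    have : IsProbabilityMeasure μ[|Iic m] :=
      cond_isProbabilityMeasure (by simp [m, measure_Iic_median])
    have : IsProbabilityMeasure μ[|Ioi m] :=
      cond_isProbabilityMeasure (by simp [m, measure_Ioi_median])
    have hsupp_left : ∀ᵐ x ∂μ[|Iic m], x ∈ Icc a m := by
      filter_upwards [cond_absolutelyContinuous hsupp, ae_cond_mem measurableSet_Iic]
        with x hx hxm using ⟨hx.1, hxm⟩
    have hsupp_right : ∀ᵐ x ∂μ[|Ioi m], x ∈ Icc m b := by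
      filter_upwards [cond_absolutelyContinuous hsupp, ae_cond_mem measurableSet_Ioi]
        with x hx hxm using ⟨le_of_lt hxm, hx.2⟩
    have hhalf : (1 / 2 : ℝ≥0∞) ≠ ∞ := by simp
    calc W1 μ (T median (n + 1) μ)
        = W1 ((1 / 2 : ℝ≥0∞) • μ[|Iic m] + (1 / 2 : ℝ≥0∞) • μ[|Ioi m])
            ((1 / 2 : ℝ≥0∞) • T median n μ[|Iic m] + (1 / 2 : ℝ≥0∞) • T median n μ[|Ioi m]) :=
          congrArg₂ W1 (half_smul_cond_Iic_median_add_half_smul_cond_Ioi μ).symm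
            (T_median_succ μ n)
      _ ≤ 1 / 2 * W1 μ[|Iic m] (T median n μ[|Iic m]) +
            1 / 2 * W1 μ[|Ioi m] (T median n μ[|Ioi m]) :=
          (W1_add_le _ _ _ _).trans (add_le_add (W1_smul_le _ hhalf _ _) (W1_smul_le _ hhalf _ _))
      _ ≤ 1 / 2 * ENNReal.ofReal ((m - a) / 2 ^ n) +
            1 / 2 * ENNReal.ofReal ((b - m) / 2 ^ n) := by
          gcongr
          exacts [ih _ hsupp_left, ih _ hsupp_right]
      _ = ENNReal.ofReal ((b - a) / 2 ^ (n + 1)) := by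
          rw [← mul_add, ← ENNReal.ofReal_add (by bound) (by bound), one_div,
            ← ENNReal.ofReal_ofNat 2, ← ENNReal.ofReal_inv_of_pos two_pos,
            ← ENNReal.ofReal_mul (by norm_num)]
          congr 1
          field_simp
          ring

theorem W1_medianSplit_le_general (μ : Measure ℝ) [IsProbabilityMeasure μ] [NullSingletonClass μ]
    (a b : ℝ) (hsupp : μ (Set.Icc a b)ᶜ = 0) (n : ℕ) :
    W1 μ (T (fun ν => sInf {x : ℝ | (1 : ℝ≥0∞) / 2 ≤ ν (Set.Iic x)}) n μ) ≤
      ENNReal.ofReal ((b - a) / 2 ^ n) :=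
  W1_T_median_le μ (mem_ae_iff.2 hsupp) n

theorem W1_medianSplit_le (μ : Measure ℝ) [IsProbabilityMeasure μ] [NullSingletonClass μ]
    (a b : ℝ) (hab : a < b) (hsupp : μ (Set.Icc a b)ᶜ = 0) (n : ℕ) :
    W1 μ (T (fun ν => sInf {x : ℝ | (1 : ℝ≥0∞) / 2 ≤ ν (Set.Iic x)}) n μ) ≤
      ENNReal.ofReal ((b - a) / 2 ^ n) :=
  W1_medianSplit_le_general μ a b hsupp n
end

section
/- For all α > 1, max(1/2, (1−1/α)^{α−1}) < 2^{−(1−1/α)}. -/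
theorem meanSplit_rate_lt_medianSplit_rate (α : ℝ) (hα : 1 < α) :
    max (1 / 2 : ℝ) ((1 - 1 / α) ^ (α - 1)) < (2 : ℝ) ^ (-(1 - 1 / α)) := by
  have hα0 : 0 < α := by linarith
  have hx0 : 0 < 1 / α := by positivity
  have hx1 : 1 / α < 1 := by rw [div_lt_one hα0]; linarith
  set x : ℝ := 1 / α with hxdef
  have ht0 : 0 < 1 - x := by linarith
  have ht1 : 1 - x < 1 := by linarith
  have hlog2lt : Real.log 2 < 1 := by
    have := Real.log_two_lt_d9; linarith
  have hlog2pos : 0 < Real.log 2 := Real.log_pos (by norm_num)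
  have hkey : 1 - x < Real.exp (-(x * Real.log 2)) := by
    have h1 : 1 - x < 1 - x * Real.log 2 := by nlinarith
    have h2 : -(x * Real.log 2) + 1 < Real.exp (-(x * Real.log 2)) :=
      Real.add_one_lt_exp (by nlinarith)
    linarith
  have hlog : Real.log (1 - x) < -(x * Real.log 2) :=
    (Real.log_lt_iff_lt_exp ht0).mpr hkey
  have hid : (α - 1) * x = 1 - x := by
    rw [hxdef]; field_simp
  apply max_lt
  · have : (1 / 2 : ℝ) = (2 : ℝ) ^ (-1 : ℝ) := by
      rw [Real.rpow_neg_one]; norm_num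
    rw [this]
    exact Real.rpow_lt_rpow_left_iff (by norm_num) |>.mpr (by linarith)
  · rw [Real.rpow_def_of_pos ht0, Real.rpow_def_of_pos (by norm_num : (0:ℝ) < 2)]
    apply Real.exp_lt_exp.mpr
    have hα1 : 0 < α - 1 := by linarith
    nlinarith [mul_lt_mul_of_pos_left hlog hα1]
end
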